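/- arXiv:2004.10342 — 5 statements merged into one kernel-verified Lean document; each statement's English description precedes it below -/
import Mathlib

section
/- Let (Ω, P) be a probability space, V a metric space with metric d, and let g : Ω → V, y : Ω → Fin C, and w : Fin C → V. Define ρ := ⨅ over pairs i ≠ j of d(w i, w j), and suppose ρ > 0. Let ε := E[d(g ω, w (y ω))]. Then P({ω : ∃ z ≠ y ω, d(g ω, w (y ω)) ≥ d(g ω, w z)}) ≤ 2ε/ρ. -/
/-! If some wrong class `z` is at least as close to `g ω` as the true class `y ω`, the triangle
inequality gives `ρ ≤ dist (w z) (w (y ω)) ≤ 2 * dist (g ω) (w (y ω))`. So misclassification forces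
the distance to the true class to be at least `ρ / 2`, and Markov's inequality bounds the
probability of that by `ε / (ρ / 2)`. -/

open MeasureTheory

theorem dist_le_two_mul_of_dist_le {V : Type*} [PseudoMetricSpace V] {x a b : V}
    (h : dist x b ≤ dist x a) : dist a b ≤ 2 * dist x a := by
  linarith [dist_triangle_left a b x]

theorem iInf_dist_offDiag_le {ι V : Type*} [PseudoMetricSpace V] (w : ι → V) {i j : ι}
    (hij : i ≠ j) : ⨅ p : {p : ι × ι // p.1 ≠ p.2}, dist (w p.1.1) (w p.1.2) ≤ dist (w i) (w j) :=
  ciInf_le ⟨0, Set.forall_mem_range.2 fun _ => dist_nonneg⟩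
    (⟨(i, j), hij⟩ : {p : ι × ι // p.1 ≠ p.2})

theorem setOf_exists_closer_subset {Ω ι V : Type*} [PseudoMetricSpace V]
    (g : Ω → V) (y : Ω → ι) (w : ι → V) {ρ : ℝ}
    (hρ : ∀ i j, i ≠ j → ρ ≤ dist (w i) (w j)) :
    {ω | ∃ z, z ≠ y ω ∧ dist (g ω) (w (y ω)) ≥ dist (g ω) (w z)}
      ⊆ {ω | ρ / 2 ≤ dist (g ω) (w (y ω))} := by
  rintro ω ⟨z, hz, hcloser⟩
  have := (hρ (y ω) z hz.symm).trans (dist_le_two_mul_of_dist_le hcloser)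
  change ρ / 2 ≤ _
  linarith

theorem measureReal_le_le_integral_div {Ω : Type*} [MeasurableSpace Ω] {μ : Measure Ω}
    {f : Ω → ℝ} (hf_nonneg : 0 ≤ᵐ[μ] f) (hf_int : Integrable f μ) {c : ℝ} (hc : 0 < c) :
    μ.real {ω | c ≤ f ω} ≤ (∫ ω, f ω ∂μ) / c := by
  rw [le_div_iff₀ hc, mul_comm]
  exact mul_meas_ge_le_integral_of_nonneg hf_nonneg hf_int c

theorem stmt1_general {Ω : Type*} [MeasurableSpace Ω] (μ : Measure Ω) [IsProbabilityMeasure μ]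
    {V : Type*} [MetricSpace V] {C : ℕ}
    (g : Ω → V) (y : Ω → Fin C) (w : Fin C → V)
    (ρ : ℝ) (hρ : ρ = ⨅ p : {p : Fin C × Fin C // p.1 ≠ p.2}, dist (w p.1.1) (w p.1.2))
    (hρpos : 0 < ρ)
    (ε : ℝ) (hε : ε = ∫ ω, dist (g ω) (w (y ω)) ∂μ)
    (hint : Integrable (fun ω => dist (g ω) (w (y ω))) μ) :
    (μ {ω | ∃ z, z ≠ y ω ∧ dist (g ω) (w (y ω)) ≥ dist (g ω) (w z)}).toReal ≤ 2 * ε / ρ := by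
  have hsubset := setOf_exists_closer_subset g y w fun i j hij =>
    hρ ▸ iInf_dist_offDiag_le w hij
  calc (μ {ω | ∃ z, z ≠ y ω ∧ dist (g ω) (w (y ω)) ≥ dist (g ω) (w z)}).toReal
      ≤ μ.real {ω | ρ / 2 ≤ dist (g ω) (w (y ω))} := measureReal_mono hsubset
    _ ≤ ε / (ρ / 2) :=
      hε ▸ measureReal_le_le_integral_div (.of_forall fun _ => dist_nonneg) hint (by positivity)
    _ = 2 * ε / ρ := by field_simp

theorem stmt1 {Ω : Type*} [MeasurableSpace Ω] (μ : Measure Ω) [IsProbabilityMeasure μ]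
    {V : Type*} [MetricSpace V] {C : ℕ}
    (g : Ω → V) (y : Ω → Fin C) (w : Fin C → V)
    (ρ : ℝ) (hρ : ρ = ⨅ p : {p : Fin C × Fin C // p.1 ≠ p.2}, dist (w p.1.1) (w p.1.2))
    (hρpos : 0 < ρ)
    (ε : ℝ) (hε : ε = ∫ ω, dist (g ω) (w (y ω)) ∂μ)
    (hint : Integrable (fun ω => dist (g ω) (w (y ω))) μ)
    (hmeas : MeasurableSet {ω | ∃ z, z ≠ y ω ∧ dist (g ω) (w (y ω)) ≥ dist (g ω) (w z)}) :
    (μ {ω | ∃ z, z ≠ y ω ∧ dist (g ω) (w (y ω)) ≥ dist (g ω) (w z)}).toReal ≤ 2 * ε / ρ :=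
  stmt1_general μ g y w ρ hρ hρpos ε hε hint
end

section
/- Fix ν ∈ (1, 2), a label y ∈ Fin C with C ≥ 1, and scores s : Fin C → ℝ with s c ≤ 1 for all c. Define ℓ := (1 - s y)^2 + ∑_{c ≠ y} (max 0 (ν - 1 + s c))^2. If there exists c ≠ y with s c ≥ s y, then ℓ ≥ 2(ν - 1). -/
theorem stmt2 {C : ℕ} (hC : 1 ≤ C) (ν : ℝ) (hν : ν ∈ Set.Ioo (1 : ℝ) 2)
    (y : Fin C) (s : Fin C → ℝ) (hs : ∀ c, s c ≤ 1)
    (hexists : ∃ c, c ≠ y ∧ s c ≥ s y) :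
    (1 - s y) ^ 2 + ∑ c ∈ Finset.univ.filter (· ≠ y), (max 0 (ν - 1 + s c)) ^ 2
      ≥ 2 * (ν - 1) := by
  obtain ⟨c, hc, hcy⟩ := hexists
  obtain ⟨h1, h2⟩ := hν
  have hmem : c ∈ Finset.univ.filter (· ≠ y) := by simp [hc]
  have hsum : (max 0 (ν - 1 + s c)) ^ 2 ≤
      ∑ x ∈ Finset.univ.filter (· ≠ y), (max 0 (ν - 1 + s x)) ^ 2 :=
    Finset.single_le_sum (f := fun x => (max 0 (ν - 1 + s x)) ^ 2) (fun i _ => sq_nonneg _) hmem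
  have hb : ν - 1 + s y ≤ max 0 (ν - 1 + s c) := by
    have := le_max_right 0 (ν - 1 + s c); linarith
  have hb0 : 0 ≤ max 0 (ν - 1 + s c) := le_max_left _ _
  have hsy := hs y
  nlinarith [sq_nonneg (max 0 (ν - 1 + s c) - (ν - 1 + s y)),
    sq_nonneg (1 - s y - max 0 (ν - 1 + s c)), sq_nonneg (ν - 2), sq_nonneg (1 - s y)]
end

section
/- For any ν ∈ (1,2) and real s, t with s ≤ t ≤ 1, (1 - s)^2 + (max 0 (ν - 1 + t))^2 ≥ 2(ν - 1). -/
theorem stmt15 (ν s t : ℝ) (hν : ν ∈ Set.Ioo (1 : ℝ) 2) (hst : s ≤ t) (ht : t ≤ 1) :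
    (1 - s) ^ 2 + (max 0 (ν - 1 + t)) ^ 2 ≥ 2 * (ν - 1) := by
  obtain ⟨h1, h2⟩ := hν
  rcases le_or_gt (ν - 1 + t) 0 with h | h
  · rw [max_eq_left h]
    nlinarith [sq_nonneg (1 - s), sq_nonneg (ν - 1)]
  · rw [max_eq_right h.le]
    nlinarith [sq_nonneg ((1 - s) - (ν - 1 + t)), sq_nonneg (ν - 2), sq_nonneg (t - s)]
end

section
/- Let ν ∈ (1, 2) and let s : Fin C → ℝ with s c ≤ 1 for all c, y ∈ Fin C, C ≥ 2. If (1 - s y)^2 + ∑_{c ≠ y} (max 0 (ν - 1 + s c))^2 < 2(ν - 1), then s y > s c for all c ≠ y. -/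
theorem stmt18 {C : ℕ} (hC : 2 ≤ C) (ν : ℝ) (hν : ν ∈ Set.Ioo (1 : ℝ) 2)
    (s : Fin C → ℝ) (hs : ∀ c, s c ≤ 1) (y : Fin C)
    (hloss : (1 - s y) ^ 2 + ∑ c ∈ Finset.univ.filter (· ≠ y),
        (max 0 (ν - 1 + s c)) ^ 2 < 2 * (ν - 1)) :
    ∀ c, c ≠ y → s y > s c := by
  obtain ⟨hν1, hν2⟩ := hν
  intro c hc
  by_contra h
  push_neg at h
  have hmem : c ∈ Finset.univ.filter (· ≠ y) := by simp [hc]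
  have hsingle : (max 0 (ν - 1 + s c)) ^ 2 ≤
      ∑ c ∈ Finset.univ.filter (· ≠ y), (max 0 (ν - 1 + s c)) ^ 2 :=
    Finset.single_le_sum (f := fun i => (max 0 (ν - 1 + s i)) ^ 2) (fun i _ => sq_nonneg _) hmem
  set b := max 0 (ν - 1 + s c) with hb
  have hb0 : 0 ≤ b := le_max_left _ _
  have hbge : ν - 1 + s c ≤ b := le_max_right _ _
  have hkey : (1 - s y) ^ 2 + b ^ 2 < 2 * (ν - 1) := by linarith
  have hsy : s y ≤ 1 := hs y
  nlinarith [sq_nonneg (1 - s y - b), sq_nonneg (ν - 2), mul_nonneg hb0 (by linarith : 0 ≤ b - (ν - 1 + s y)), sq_nonneg (b + s y - 1), sq_nonneg (ν - 2 + s y + b)]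
end

section
/- Let P be a probability measure on pairs (x, y), f a scorer with scores s_c(x) ≤ 1, and ν ∈ (1,2). Then the top-1 misclassification probability satisfies P(y ∉ argmax_c s_c(x)) ≤ E[ℓ_ccl(f(x), y)] / (2(ν - 1)), where ℓ_ccl(f(x), y) = (1 - s_y(x))^2 + ∑_{c≠y} (max 0 (ν - 1 + s_c(x)))^2. -/
/-! If some wrong class scores at least as high as the true one, the two corresponding terms of the
loss already sum to at least `2(ν - 1)`, so the misclassification event lies in
`{2(ν - 1) ≤ ℓ}` and the bound is Markov's inequality for the nonnegative loss `ℓ`. -/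

open MeasureTheory

lemma two_mul_sub_one_le_sq_add_sq_max (ν a b : ℝ) (hab : a ≤ b) :
    2 * (ν - 1) ≤ (1 - a) ^ 2 + (max 0 (ν - 1 + b)) ^ 2 := by
  rcases le_or_gt (ν - 1 + b) 0 with h | h
  · rw [max_eq_left h]
    nlinarith [sq_nonneg (ν - 1)]
  · rw [max_eq_right h.le]
    rcases le_or_gt b 1 with hb | hb
    -- `(1 - b)² + (ν - 1 + b)² - 2(ν - 1) = (2 - 2b - ν)² / 2 + (ν - 2)² / 2`
    · nlinarith [mul_nonneg (sub_nonneg.2 hab) (by linarith : (0 : ℝ) ≤ 2 - a - b),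
        sq_nonneg (ν - 2), sq_nonneg (2 * b + ν - 2)]
    · nlinarith [sq_nonneg (ν - 1), sq_nonneg (1 - a), mul_pos h (by linarith : (0 : ℝ) < b - 1)]

section CosineContrastiveLoss

variable {ι : Type*} [Fintype ι] [DecidableEq ι]

def cosineContrastiveLoss (ν : ℝ) (s : ι → ℝ) (y : ι) : ℝ :=
  (1 - s y) ^ 2 + ∑ c ∈ Finset.univ.filter (· ≠ y), (max 0 (ν - 1 + s c)) ^ 2

lemma cosineContrastiveLoss_nonneg (ν : ℝ) (s : ι → ℝ) (y : ι) :
    0 ≤ cosineContrastiveLoss ν s y :=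
  add_nonneg (sq_nonneg _) (Finset.sum_nonneg fun _ _ ↦ sq_nonneg _)

lemma two_mul_sub_one_le_cosineContrastiveLoss {ν : ℝ} {s : ι → ℝ} {y : ι}
    (hy : ∃ c, c ≠ y ∧ s c ≥ s y) : 2 * (ν - 1) ≤ cosineContrastiveLoss ν s y := by
  obtain ⟨c, hcy, hc⟩ := hy
  calc 2 * (ν - 1) ≤ (1 - s y) ^ 2 + (max 0 (ν - 1 + s c)) ^ 2 :=
        two_mul_sub_one_le_sq_add_sq_max ν _ _ hc
    _ ≤ cosineContrastiveLoss ν s y := by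
        refine add_le_add_right (Finset.single_le_sum (f := fun c ↦ (max 0 (ν - 1 + s c)) ^ 2)
          (fun _ _ ↦ sq_nonneg _) ?_) _
        simpa using hcy

end CosineContrastiveLoss

lemma measureReal_le_integral_div_of_subset {Ω : Type*} [MeasurableSpace Ω] {μ : Measure Ω}
    {f : Ω → ℝ} {E : Set Ω} {ε : ℝ} (hf : 0 ≤ f) (hfi : Integrable f μ) (hε : 0 < ε)
    (hE : E ⊆ {ω | ε ≤ f ω}) : μ.real E ≤ (∫ ω, f ω ∂μ) / ε := by
  rw [le_div_iff₀' hε]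
  calc ε * μ.real E ≤ ε * μ.real {ω | ε ≤ f ω} :=
        mul_le_mul_of_nonneg_left (measureReal_mono hE (hfi.measure_ge_lt_top hε).ne) hε.le
    _ ≤ ∫ ω, f ω ∂μ := mul_meas_ge_le_integral_of_nonneg (.of_forall hf) hfi ε

theorem stmt19_general {Ω : Type*} [MeasurableSpace Ω] (μ : Measure Ω)
    {C : ℕ} (ν : ℝ) (hν : ν ∈ Set.Ioo (1 : ℝ) 2)
    (y : Ω → Fin C) (s : Ω → Fin C → ℝ)
    (ℓ : Ω → ℝ)
    (hℓ : ∀ ω, ℓ ω = (1 - s ω (y ω)) ^ 2 +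
        ∑ c ∈ Finset.univ.filter (· ≠ y ω), (max 0 (ν - 1 + s ω c)) ^ 2)
    (hint : Integrable ℓ μ) :
    (μ {ω | ∃ c, c ≠ y ω ∧ s ω c ≥ s ω (y ω)}).toReal
      ≤ (∫ ω, ℓ ω ∂μ) / (2 * (ν - 1)) := by
  have hℓ' : ℓ = fun ω ↦ cosineContrastiveLoss ν (s ω) (y ω) := funext hℓ
  subst hℓ'
  exact measureReal_le_integral_div_of_subset (fun ω ↦ cosineContrastiveLoss_nonneg _ _ _) hint
    (by linarith [hν.1]) fun ω ↦ two_mul_sub_one_le_cosineContrastiveLoss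

theorem stmt19 {Ω : Type*} [MeasurableSpace Ω] (μ : Measure Ω) [IsProbabilityMeasure μ]
    {C : ℕ} (ν : ℝ) (hν : ν ∈ Set.Ioo (1 : ℝ) 2)
    (y : Ω → Fin C) (s : Ω → Fin C → ℝ) (hs : ∀ ω c, s ω c ≤ 1)
    (ℓ : Ω → ℝ)
    (hℓ : ∀ ω, ℓ ω = (1 - s ω (y ω)) ^ 2 +
        ∑ c ∈ Finset.univ.filter (· ≠ y ω), (max 0 (ν - 1 + s ω c)) ^ 2)
    (hint : Integrable ℓ μ)
    (hmeas : MeasurableSet {ω | ∃ c, c ≠ y ω ∧ s ω c ≥ s ω (y ω)}) :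
    (μ {ω | ∃ c, c ≠ y ω ∧ s ω c ≥ s ω (y ω)}).toReal
      ≤ (∫ ω, ℓ ω ∂μ) / (2 * (ν - 1)) :=
  stmt19_general μ ν hν y s ℓ hℓ hint
end
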